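/- arXiv:2412.06633 — 3 statements merged into one kernel-verified Lean document; each statement's English description precedes it below -/
import Mathlib

section
/- Let U be a k-dimensional subspace of ℝ^n, let α_1, …, α_m span ℝ^n, let β_i = Proj_U α_i, and let H_i = {v : ⟨α_i, v⟩ = 0}. For a k-subset I ⊆ [m], the family {β_i : i ∈ I} is linearly independent if and only if U ⊕ ⋂_{i∈I} H_i = ℝ^n. -/
open scoped RealInnerProductSpace

/-!
Let `W` be the span of `{αᵢ : i ∈ I}`, so that `⋂_{i∈I} Hᵢ = Wᗮ`, and let `S ≤ U` be the span of
`{βᵢ : i ∈ I}`. Since the orthogonal projection onto `U` is self-adjoint, a vector of `U` is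
orthogonal to `αᵢ` iff it is orthogonal to `βᵢ`; hence `U ∩ Wᗮ = U ∩ Sᗮ`, and this vanishes iff
`S = U`. As `I` has `k = dim U` elements, `S = U` means that the `βᵢ` are independent, while
`dim Wᗮ ≥ n - k` makes `U ∩ Wᗮ = 0` equivalent to `U ⊕ Wᗮ = ℝⁿ`.
-/

open Module Set Submodule

section InnerProduct

variable {𝕜 E : Type*} [RCLike 𝕜] [NormedAddCommGroup E] [InnerProductSpace 𝕜 E]

theorem Submodule.iInf_orthogonal_singleton_eq_orthogonal_span {ι : Type*} (v : ι → E)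
    (I : Finset ι) : ⨅ i ∈ I, (𝕜 ∙ v i)ᗮ = (span 𝕜 (range fun i : I => v i))ᗮ := by
  rw [span_range_eq_iSup, ← iInf_orthogonal, iInf_subtype']

theorem Submodule.span_range_starProjection_le (K : Submodule 𝕜 E) [K.HasOrthogonalProjection]
    {ι : Type*} (v : ι → E) : span 𝕜 (range fun i => K.starProjection (v i)) ≤ K :=
  span_le.2 <| range_subset_iff.2 fun i => K.starProjection_apply_mem (v i)

theorem Submodule.inf_orthogonal_span_starProjection (K : Submodule 𝕜 E)
    [K.HasOrthogonalProjection] {ι : Type*} (v : ι → E) :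
    K ⊓ (span 𝕜 (range fun i => K.starProjection (v i)))ᗮ = K ⊓ (span 𝕜 (range v))ᗮ := by
  ext x
  simp only [mem_inf, span_range_eq_iSup, ← iInf_orthogonal, mem_iInf,
    mem_orthogonal_singleton_iff_inner_right]
  refine and_congr_right fun hx => forall_congr' fun i => ?_
  rw [inner_starProjection_left_eq_right, starProjection_eq_self_iff.2 hx]

theorem Submodule.inf_orthogonal_eq_bot_iff_of_le {K₁ K₂ : Submodule 𝕜 E}
    [K₁.HasOrthogonalProjection] (h : K₁ ≤ K₂) : K₂ ⊓ K₁ᗮ = ⊥ ↔ K₁ = K₂ := by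
  refine ⟨fun h' => ?_, fun h' => h' ▸ K₁.inf_orthogonal_eq_bot⟩
  rw [← sup_orthogonal_inf_of_hasOrthogonalProjection h, inf_comm, h', sup_bot_eq]

theorem Submodule.isCompl_orthogonal_iff_disjoint [FiniteDimensional 𝕜 E] {U W : Submodule 𝕜 E}
    (h : finrank 𝕜 W ≤ finrank 𝕜 U) : IsCompl U Wᗮ ↔ Disjoint U Wᗮ := by
  refine ⟨IsCompl.disjoint, fun hdisj =>
    ⟨hdisj, codisjoint_iff.2 <| eq_top_of_disjoint _ _ ?_ hdisj⟩⟩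
  have := W.finrank_add_finrank_orthogonal
  omega

end InnerProduct

theorem linearIndependent_iff_span_eq_of_card_eq_finrank {K V ι : Type*} [DivisionRing K]
    [AddCommGroup V] [Module K V] [Fintype ι] {U : Submodule K V} [FiniteDimensional K U]
    {v : ι → V} (hcard : Fintype.card ι = finrank K U) (hle : span K (range v) ≤ U) :
    LinearIndependent K v ↔ span K (range v) = U := by
  rw [linearIndependent_iff_card_eq_finrank_span, hcard, Set.finrank]
  exact ⟨fun h => eq_of_le_of_finrank_eq hle h.symm, fun h => h ▸ rfl⟩

theorem stmt9_general {n m k : ℕ} (U : Submodule ℝ (EuclideanSpace ℝ (Fin n)))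
    (hU : Module.finrank ℝ U = k)
    (α β : Fin m → EuclideanSpace ℝ (Fin n))
    (hβ : ∀ i, β i = (U.orthogonalProjectionOnto (α i) : EuclideanSpace ℝ (Fin n)))
    (H : Fin m → Submodule ℝ (EuclideanSpace ℝ (Fin n)))
    (hH : ∀ i v, v ∈ H i ↔ ⟪α i, v⟫ = 0)
    (I : Finset (Fin m)) (hI : I.card = k) :
    LinearIndependent ℝ (fun i : I => β i.1) ↔ IsCompl U (⨅ i ∈ I, H i) := by
  have hH' : H = fun i => (ℝ ∙ α i)ᗮ :=
    funext fun i => ext fun v => (hH i v).trans mem_orthogonal_singleton_iff_inner_right.symm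
  have hβ' : (fun i : I => β i.1) = fun i : I => U.starProjection (α i) := funext fun i => hβ i
  have hcard : Fintype.card I = finrank ℝ U := by simp [hI, hU]
  have hW : finrank ℝ (span ℝ (range fun i : I => α i)) ≤ finrank ℝ U :=
    hcard ▸ finrank_range_le_card _
  rw [hH', iInf_orthogonal_singleton_eq_orthogonal_span, isCompl_orthogonal_iff_disjoint hW,
    disjoint_iff, ← inf_orthogonal_span_starProjection,
    inf_orthogonal_eq_bot_iff_of_le (span_range_starProjection_le U _), hβ',
    linearIndependent_iff_span_eq_of_card_eq_finrank hcard (span_range_starProjection_le U _)]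

/-- For a `k`-subset `I ⊆ [m]`, the projections `{βᵢ : i ∈ I}` are linearly
independent iff `U ⊕ ⋂_{i∈I} Hᵢ = ℝ^n`. -/
theorem stmt9 {n m k : ℕ} (U : Submodule ℝ (EuclideanSpace ℝ (Fin n)))
    (hU : Module.finrank ℝ U = k)
    (α β : Fin m → EuclideanSpace ℝ (Fin n))
    (hα : Submodule.span ℝ (Set.range α) = ⊤)
    (hβ : ∀ i, β i = (U.orthogonalProjectionOnto (α i) : EuclideanSpace ℝ (Fin n)))
    (H : Fin m → Submodule ℝ (EuclideanSpace ℝ (Fin n)))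
    (hH : ∀ i v, v ∈ H i ↔ ⟪α i, v⟫ = 0)
    (I : Finset (Fin m)) (hI : I.card = k) :
    LinearIndependent ℝ (fun i : I => β i.1) ↔ IsCompl U (⨅ i ∈ I, H i) :=
  stmt9_general U hU α β hβ H hH I hI
end

section
/- Let U ∈ Gr(k,n) over a field F, X a subspace of dimension n−k with matrix representative A_X, and define a_I(X) = (−1)^{k(k+1)/2 + Σ_{i∈I} i} Δ_{[n]∖I}(A_X) for each k-subset I of [n]. Then F^n = U ⊕ X if and only if Σ_{I} a_I(X) · Δ_I(A_U) ≠ 0, where A_U is any matrix representative of U. -/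
open Matrix

/-- The maximal minor of a matrix `A` with `r` rows on the column set `S`
(taken in increasing order); defined to be `0` if `S` does not have `r` elements. -/
noncomputable def minor {F : Type*} [Field F] {r N : ℕ} (A : Matrix (Fin r) (Fin N) F)
    (S : Finset (Fin N)) : F :=
  if h : S.card = r then (A.submatrix id (fun j => (S.orderIsoOfFin h j : Fin N))).det else 0

/-!
Stacking `A_U` on top of `A_X` gives a square matrix `M` whose rows span `U ⊔ X`, so
`det M ≠ 0` iff `U ⊔ X = ⊤`, which (as `dim U + dim X = n`) holds iff `U ⊕ X = F^n`. The
generalized Laplace expansion of `det M` along its first `k` rows is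
`∑_I sign(σ_I) Δ_I(A_U) Δ_{Iᶜ}(A_X)`, where `σ_I` moves the columns in `I` to the front
keeping their order. The inversions of `σ_I` are the pairs `y < x` with `y ∉ I`, `x ∈ I`, so
`sign σ_I = (-1)^(∑_{i ∈ I} i + k choose 2)` (indices from `0`), which is the sign in `a_I(X)`.
-/

open Finset Equiv Equiv.Perm

namespace Finset

theorem sum_card_filter_lt_eq_choose_two {α : Type*} [LinearOrder α] (I : Finset α) :
    ∑ x ∈ I, #{y ∈ I | y < x} = (#I).choose 2 := by
  induction I using Finset.induction_on_max with
  | empty => simp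
  | insert a s hlt ih =>
    have ha : a ∉ s := fun h => lt_irrefl a (hlt a h)
    have hfilter_a : {y ∈ insert a s | y < a} = s := by
      ext y; simp only [mem_filter, mem_insert]
      constructor
      · rintro ⟨rfl | hy, hya⟩
        · exact absurd hya (lt_irrefl _)
        · exact hy
      · exact fun hy => ⟨Or.inr hy, hlt y hy⟩
    have hfilter_s : ∀ x ∈ s, #{y ∈ insert a s | y < x} = #{y ∈ s | y < x} := fun x hx => by
      rw [filter_insert, if_neg (not_lt.2 (hlt x hx).le)]
    rw [sum_insert ha, hfilter_a, sum_congr rfl hfilter_s, ih, card_insert_of_notMem ha,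
      Nat.choose_succ_succ', Nat.choose_one_right]

theorem card_compl_of_card_eq {k l : ℕ} {I : Finset (Fin (k + l))} (hI : #I = k) : #Iᶜ = l := by
  rw [card_compl, Fintype.card_fin]
  omega

variable {k l : ℕ} (I : Finset (Fin (k + l))) (hI : #I = k)

noncomputable def shuffleEquiv : Fin k ⊕ Fin l ≃ Fin (k + l) :=
  (Equiv.sumCongr (I.orderIsoOfFin hI).toEquiv
    ((Iᶜ.orderIsoOfFin (card_compl_of_card_eq hI)).toEquiv.trans
      (Equiv.subtypeEquivRight fun _ => mem_compl))).trans
    (Equiv.sumCompl (· ∈ I))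

@[simp]
theorem shuffleEquiv_inl (t : Fin k) :
    I.shuffleEquiv hI (.inl t) = I.orderIsoOfFin hI t := rfl

@[simp]
theorem shuffleEquiv_inr (s : Fin l) :
    I.shuffleEquiv hI (.inr s) = Iᶜ.orderIsoOfFin (card_compl_of_card_eq hI) s := rfl

theorem shuffleEquiv_symm_of_mem {x : Fin (k + l)} (hx : x ∈ I) :
    (I.shuffleEquiv hI).symm x = .inl ((I.orderIsoOfFin hI).symm ⟨x, hx⟩) := by
  rw [Equiv.symm_apply_eq, shuffleEquiv_inl, OrderIso.apply_symm_apply]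

theorem shuffleEquiv_symm_of_notMem {x : Fin (k + l)} (hx : x ∉ I) :
    (I.shuffleEquiv hI).symm x =
      .inr ((Iᶜ.orderIsoOfFin (card_compl_of_card_eq hI)).symm ⟨x, mem_compl.2 hx⟩) := by
  rw [Equiv.symm_apply_eq, shuffleEquiv_inr, OrderIso.apply_symm_apply]

theorem isLeft_shuffleEquiv_symm (x : Fin (k + l)) :
    ((I.shuffleEquiv hI).symm x).isLeft ↔ x ∈ I := by
  by_cases hx : x ∈ I
  · simp [shuffleEquiv_symm_of_mem I hI hx, hx]
  · simp [shuffleEquiv_symm_of_notMem I hI hx, hx]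

noncomputable def shufflePerm : Perm (Fin (k + l)) :=
  (I.shuffleEquiv hI).symm.trans finSumFinEquiv

theorem shufflePerm_lt_shufflePerm_iff {x y : Fin (k + l)} (hyx : y < x) :
    I.shufflePerm hI y < I.shufflePerm hI x ↔ y ∈ I ∨ x ∉ I := by
  have hIc := card_compl_of_card_eq hI
  simp only [shufflePerm, Equiv.trans_apply, Fin.lt_def]
  by_cases hy : y ∈ I <;> by_cases hx : x ∈ I
  · simp only [shuffleEquiv_symm_of_mem I hI hy, shuffleEquiv_symm_of_mem I hI hx,
      finSumFinEquiv_apply_left, Fin.val_castAdd, hy, true_or, iff_true]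
    exact (I.orderIsoOfFin hI).symm.lt_iff_lt.2 hyx
  · simp only [shuffleEquiv_symm_of_mem I hI hy, shuffleEquiv_symm_of_notMem I hI hx,
      finSumFinEquiv_apply_left, finSumFinEquiv_apply_right, Fin.val_castAdd, Fin.val_natAdd,
      hy, true_or, iff_true]
    omega
  · simp only [shuffleEquiv_symm_of_notMem I hI hy, shuffleEquiv_symm_of_mem I hI hx,
      finSumFinEquiv_apply_left, finSumFinEquiv_apply_right, Fin.val_castAdd, Fin.val_natAdd,
      hy, hx, false_or, not_true, iff_false]
    omega
  · simp only [shuffleEquiv_symm_of_notMem I hI hy, shuffleEquiv_symm_of_notMem I hI hx,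
      finSumFinEquiv_apply_right, Fin.val_natAdd, hx, not_false_eq_true, or_true, iff_true,
      Nat.add_lt_add_iff_left]
    exact (Iᶜ.orderIsoOfFin hIc).symm.lt_iff_lt.2 (Subtype.mk_lt_mk.2 hyx)

theorem sign_shufflePerm :
    sign (I.shufflePerm hI) = (-1) ^ (∑ i ∈ I, (i : ℕ) + k.choose 2) := by
  have hrow : ∀ x, ∏ y ∈ Iio x,
      (if I.shufflePerm hI y < I.shufflePerm hI x then (1 : ℤˣ) else -1) =
        if x ∈ I then (-1) ^ #{y ∈ Iio x | y ∉ I} else 1 := by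
    intro x
    rw [prod_congr rfl fun y hy => if_congr
      (I.shufflePerm_lt_shufflePerm_iff hI (mem_Iio.1 hy)) rfl rfl]
    by_cases hx : x ∈ I
    · simp [hx, prod_ite, prod_const]
    · simp [hx]
  have hexp : ∑ x ∈ I, #{y ∈ Iio x | y ∉ I} + k.choose 2 = ∑ x ∈ I, (x : ℕ) := by
    have hpairs : ∑ x ∈ I, #{y ∈ I | y < x} = k.choose 2 := by
      rw [I.sum_card_filter_lt_eq_choose_two, hI]
    rw [← hpairs, ← sum_add_distrib]
    refine sum_congr rfl fun x _ => ?_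
    have hbelow : {y ∈ Iio x | y ∈ I} = {y ∈ I | y < x} := by
      ext y
      simp [and_comm]
    rw [← Fin.card_Iio x, ← card_filter_add_card_filter_not (s := Iio x) (· ∈ I), hbelow,
      add_comm]
  rw [sign_eq_prod_prod_Iio, Fintype.prod_congr _ _ hrow, Fintype.prod_ite_mem,
    prod_pow_eq_pow_sum, ← hexp, add_assoc, ← two_mul, pow_add, pow_mul, neg_one_sq, one_pow,
    mul_one]

end Finset

theorem minor_eq_sum_sign_mul_prod {F : Type*} [Field F] {r N : ℕ} (A : Matrix (Fin r) (Fin N) F)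
    {S : Finset (Fin N)} (hS : #S = r) :
    minor A S = ∑ π : Perm (Fin r), (sign π : F) * ∏ t, A (π t) (S.orderIsoOfFin hS t) := by
  rw [minor, dif_pos hS, det_apply']
  rfl

section Laplace

variable {k l : ℕ}

/- `I` is recovered from the product as the set of points sent into the first `k` places
(`isLeft_laplacePerm`), so this is injective, hence bijective by counting. -/
noncomputable def laplacePerm
    (p : {I : Finset (Fin (k + l)) // #I = k} × (Perm (Fin k) × Perm (Fin l))) :
    Perm (Fin (k + l)) :=
  finSumFinEquiv.permCongr (p.2.1.sumCongr p.2.2) * p.1.1.shufflePerm p.1.2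

theorem isLeft_laplacePerm
    (p : {I : Finset (Fin (k + l)) // #I = k} × (Perm (Fin k) × Perm (Fin l))) (x : Fin (k + l)) :
    (finSumFinEquiv.symm (laplacePerm p x)).isLeft ↔ x ∈ p.1.1 := by
  simp [laplacePerm, permCongr_apply, shufflePerm, isLeft_shuffleEquiv_symm]

theorem laplacePerm_bijective : Function.Bijective (laplacePerm (k := k) (l := l)) := by
  refine (Fintype.bijective_iff_injective_and_card _).2 ⟨?_, ?_⟩
  · rintro ⟨⟨I, hI⟩, π⟩ ⟨⟨J, hJ⟩, ρ⟩ h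
    obtain rfl : I = J := Finset.ext fun x => by
      rw [← isLeft_laplacePerm (⟨I, hI⟩, π), h, isLeft_laplacePerm]
    have hπρ := sumCongrHom_injective <| finSumFinEquiv.permCongr.injective (mul_right_cancel h)
    simp_all
  · simp only [Fintype.card_prod, Fintype.card_finset_len, Fintype.card_fin, Fintype.card_perm,
      ← Nat.add_choose_mul_factorial_mul_factorial]
    rw [Nat.choose_symm_add]
    ring

theorem sign_mul_prod_laplacePerm {F : Type*} [Field F] (A : Matrix (Fin k) (Fin (k + l)) F)
    (B : Matrix (Fin l) (Fin (k + l)) F) (I : {I : Finset (Fin (k + l)) // #I = k})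
    (π : Perm (Fin k) × Perm (Fin l)) :
    (sign (laplacePerm (I, π)) : F) *
        ∏ x, (fromRows A B).submatrix finSumFinEquiv.symm id (laplacePerm (I, π) x) x =
      (-1) ^ (∑ i ∈ I.1, (i : ℕ) + k.choose 2) *
        ((sign π.1 * ∏ t, A (π.1 t) (I.1.orderIsoOfFin I.2 t)) *
          (sign π.2 * ∏ s, B (π.2 s) (I.1ᶜ.orderIsoOfFin (card_compl_of_card_eq I.2) s))) := by
  have hprod : ∏ x, (fromRows A B).submatrix finSumFinEquiv.symm id (laplacePerm (I, π) x) x =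
      (∏ t, A (π.1 t) (I.1.orderIsoOfFin I.2 t)) *
        ∏ s, B (π.2 s) (I.1ᶜ.orderIsoOfFin (card_compl_of_card_eq I.2) s) := by
    rw [← (I.1.shuffleEquiv I.2).prod_comp, Fintype.prod_sum_type]
    simp only [laplacePerm, shufflePerm, Perm.mul_apply, permCongr_apply, Equiv.trans_apply,
      Equiv.symm_apply_apply, submatrix_apply, id]
    simp
  rw [hprod]
  simp only [laplacePerm, Perm.sign_mul, sign_permCongr, sign_sumCongr, sign_shufflePerm]
  push_cast
  ring

theorem det_fromRows_eq_sum_minor_mul_minor {F : Type*} [Field F]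
    (A : Matrix (Fin k) (Fin (k + l)) F) (B : Matrix (Fin l) (Fin (k + l)) F) :
    ((fromRows A B).submatrix finSumFinEquiv.symm id).det =
      ∑ I ∈ (univ : Finset (Fin (k + l))).powersetCard k,
        (-1) ^ (∑ i ∈ I, (i : ℕ) + k.choose 2) * (minor A I * minor B Iᶜ) := by
  rw [det_apply', ← Fintype.sum_bijective _ laplacePerm_bijective _ _ fun _ => rfl,
    Fintype.sum_prod_type, sum_subtype _ fun _ => mem_powersetCard_univ]
  refine Fintype.sum_congr _ _ fun I => ?_
  rw [minor_eq_sum_sign_mul_prod A I.2, minor_eq_sum_sign_mul_prod B (card_compl_of_card_eq I.2),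
    sum_mul_sum, mul_sum, Fintype.sum_prod_type]
  simp only [sign_mul_prod_laplacePerm, mul_sum]

end Laplace

theorem Matrix.det_ne_zero_iff_span_range_eq_top {K m : Type*} [Field K] [Fintype m]
    [DecidableEq m] (M : Matrix m m K) : M.det ≠ 0 ↔ Submodule.span K (Set.range M) = ⊤ := by
  rw [← isUnit_iff_ne_zero, ← isUnit_iff_isUnit_det, ← vecMul_surjective_iff_isUnit]
  change Function.Surjective M.vecMulLinear ↔ _
  rw [← LinearMap.range_eq_top, range_vecMulLinear]
  rfl

theorem Matrix.span_range_fromRows {R m₁ m₂ n : Type*} [Semiring R] (A : Matrix m₁ n R)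
    (B : Matrix m₂ n R) :
    Submodule.span R (Set.range (fromRows A B)) =
      Submodule.span R (Set.range A) ⊔ Submodule.span R (Set.range B) := by
  change Submodule.span R (Set.range (Sum.elim A.row B.row)) = _
  rw [Set.Sum.elim_range, Submodule.span_union]
  rfl

theorem Submodule.isCompl_iff_codisjoint {K V : Type*} [DivisionRing K] [AddCommGroup V]
    [Module K V] [FiniteDimensional K V] {s t : Submodule K V}
    (hdim : Module.finrank K s + Module.finrank K t ≤ Module.finrank K V) :
    IsCompl s t ↔ Codisjoint s t := by
  refine ⟨IsCompl.codisjoint, fun h => ⟨?_, h⟩⟩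
  have hsum := s.finrank_sup_add_finrank_inf_eq t
  rw [h.eq_top, finrank_top] at hsum
  rw [disjoint_iff, ← Submodule.finrank_eq_zero]
  omega

theorem stmt11_general {F : Type*} [Field F] {n k : ℕ} (hkn : k < n)
    (U X : Submodule F (Fin n → F))
    (hUdim : Module.finrank F U = k) (hXdim : Module.finrank F X = n - k)
    (AU : Matrix (Fin k) (Fin n) F) (AX : Matrix (Fin (n - k)) (Fin n) F)
    (hAU : Submodule.span F (Set.range AU) = U)
    (hAX : Submodule.span F (Set.range AX) = X) :
    IsCompl U X ↔
      ∑ I ∈ (Finset.univ.powersetCard k : Finset (Finset (Fin n))),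
        ((-1 : F) ^ (k * (k + 1) / 2 + ∑ i ∈ I, ((i : ℕ) + 1)) * minor AX Iᶜ) * minor AU I
        ≠ 0 := by
  generalize hl : n - k = l at AX hXdim ⊢
  obtain rfl : n = k + l := by omega
  have hsign : ∀ I ∈ (univ : Finset (Fin (k + l))).powersetCard k,
      (-1 : F) ^ (k * (k + 1) / 2 + ∑ i ∈ I, ((i : ℕ) + 1)) * minor AX Iᶜ * minor AU I =
        (-1) ^ (∑ i ∈ I, (i : ℕ) + k.choose 2) * (minor AU I * minor AX Iᶜ) := by
    intro I hI
    have hgauss := Nat.choose_two_right (k + 1)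
    rw [Nat.add_sub_cancel, Nat.choose_succ_succ', Nat.choose_one_right, mul_comm] at hgauss
    have hexp : k * (k + 1) / 2 + ∑ i ∈ I, ((i : ℕ) + 1) =
        ∑ i ∈ I, (i : ℕ) + k.choose 2 + 2 * k := by
      rw [← hgauss, sum_add_distrib, sum_const, mem_powersetCard_univ.1 hI, smul_eq_mul, mul_one]
      ring
    rw [hexp, pow_add, pow_mul, neg_one_sq, one_pow, mul_one]
    ring
  have hrows : Submodule.span F (Set.range ((fromRows AU AX).submatrix finSumFinEquiv.symm id)) =
      U ⊔ X := by
    rw [← hAU, ← hAX, ← span_range_fromRows]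
    exact congrArg _ (finSumFinEquiv.symm.surjective.range_comp (fromRows AU AX).row)
  rw [sum_congr rfl hsign, ← det_fromRows_eq_sum_minor_mul_minor,
    det_ne_zero_iff_span_range_eq_top, hrows, ← codisjoint_iff]
  exact Submodule.isCompl_iff_codisjoint (by rw [hUdim, hXdim, Module.finrank_fin_fun])

/-- `F^n = U ⊕ X` iff `∑_I a_I(X) Δ_I(A_U) ≠ 0`, where
`a_I(X) = (−1)^{k(k+1)/2 + Σ_{i∈I} i} Δ_{[n]∖I}(A_X)` (indices written `1`-based). -/
theorem stmt11 {F : Type*} [Field F] {n k : ℕ} (hk : 0 < k) (hkn : k < n)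
    (U X : Submodule F (Fin n → F))
    (hUdim : Module.finrank F U = k) (hXdim : Module.finrank F X = n - k)
    (AU : Matrix (Fin k) (Fin n) F) (AX : Matrix (Fin (n - k)) (Fin n) F)
    (hAU : Submodule.span F (Set.range AU) = U)
    (hAX : Submodule.span F (Set.range AX) = X) :
    IsCompl U X ↔
      ∑ I ∈ (Finset.univ.powersetCard k : Finset (Finset (Fin n))),
        ((-1 : F) ^ (k * (k + 1) / 2 + ∑ i ∈ I, ((i : ℕ) + 1)) * minor AX Iᶜ) * minor AU I
        ≠ 0 :=
  stmt11_general hkn U X hUdim hXdim AU AX hAU hAX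
end

section
/- Let 𝔐_1 and 𝔐_2 be matroids on the same ground set [m] with the same rank k, such that every independent set of 𝔐_2 is independent in 𝔐_1. Then every broken circuit of 𝔐_1 contains a broken circuit of 𝔐_2 (with respect to a common fixed linear order on [m]). -/
/-- A circuit of a matroid: a minimal dependent set (given here as a finite set, for a
matroid whose ground set is the whole type). -/
def IsCircuitOf {α : Type*} (M : Matroid α) (C : Finset α) : Prop :=
  ¬ M.Indep ↑C ∧ ∀ D : Finset α, D ⊂ C → M.Indep ↑D

/-- A broken circuit: a circuit with its maximal element (in the fixed linear order)
removed. -/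
def IsBrokenCircuitOf {α : Type*} [LinearOrder α] (M : Matroid α) (B : Finset α) : Prop :=
  ∃ (C : Finset α) (hC : C.Nonempty), IsCircuitOf M C ∧ B = C.erase (C.max' hC)

/-!
A circuit `C` of `M₁` is dependent in `M₂`, so it contains a circuit `C'` of `M₂`. Since
`max C' ≤ max C`, and `max C ∈ C'` would force `max C' = max C`, the broken circuit
`C' \ {max C'}` lies inside `C \ {max C}`.
-/

theorem Finset.erase_max'_subset_erase_max' {α : Type*} [LinearOrder α] {s t : Finset α}
    (hs : s.Nonempty) (ht : t.Nonempty) (hst : s ⊆ t) :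
    s.erase (s.max' hs) ⊆ t.erase (t.max' ht) := by
  intro x hx
  obtain ⟨hx_ne, hxs⟩ := Finset.mem_erase.mp hx
  refine Finset.mem_erase.mpr ⟨fun hx_eq => hx_ne (le_antisymm (s.le_max' x hxs) ?_), hst hxs⟩
  exact hx_eq ▸ Finset.max'_subset hs hst

theorem IsCircuitOf.nonempty {α : Type*} {M : Matroid α} {C : Finset α}
    (hC : IsCircuitOf M C) : C.Nonempty := by
  rw [Finset.nonempty_iff_ne_empty]
  rintro rfl
  exact hC.1 (by simp)

theorem exists_isCircuitOf_subset {α : Type*} (M : Matroid α) (C : Finset α)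
    (hC : ¬ M.Indep ↑C) : ∃ C' ⊆ C, IsCircuitOf M C' := by
  induction C using Finset.strongInduction with
  | _ C ih =>
    by_cases hmin : ∀ D : Finset α, D ⊂ C → M.Indep ↑D
    · exact ⟨C, subset_rfl, hC, hmin⟩
    · push Not at hmin
      obtain ⟨D, hDC, hD⟩ := hmin
      obtain ⟨C', hC'D, hC'⟩ := ih D hDC hD
      exact ⟨C', hC'D.trans hDC.subset, hC'⟩

theorem IsBrokenCircuitOf.exists_subset_of_indep_imp {α : Type*} [LinearOrder α]
    {M₁ M₂ : Matroid α} (hind : ∀ S : Set α, M₂.Indep S → M₁.Indep S) {B : Finset α}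
    (hB : IsBrokenCircuitOf M₁ B) : ∃ B' : Finset α, IsBrokenCircuitOf M₂ B' ∧ B' ⊆ B := by
  obtain ⟨C, hC_ne, hC, rfl⟩ := hB
  obtain ⟨C', hC'C, hC'⟩ := exists_isCircuitOf_subset M₂ C fun h => hC.1 (hind _ h)
  exact ⟨_, ⟨C', hC'.nonempty, hC', rfl⟩,
    Finset.erase_max'_subset_erase_max' hC'.nonempty hC_ne hC'C⟩

theorem stmt14_general {m : ℕ} (M₁ M₂ : Matroid (Fin m))
    (hind : ∀ S : Set (Fin m), M₂.Indep S → M₁.Indep S)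
    (B : Finset (Fin m)) (hB : IsBrokenCircuitOf M₁ B) :
    ∃ B' : Finset (Fin m), IsBrokenCircuitOf M₂ B' ∧ B' ⊆ B :=
  hB.exists_subset_of_indep_imp hind

/-- If `𝔐₁, 𝔐₂` are rank-`k` matroids on `[m]` and every independent set
of `𝔐₂` is independent in `𝔐₁`, then every broken circuit of `𝔐₁` contains a broken circuit
of `𝔐₂`. -/
theorem stmt14 {m k : ℕ} (M₁ M₂ : Matroid (Fin m))
    (hE₁ : M₁.E = Set.univ) (hE₂ : M₂.E = Set.univ)
    (hrk₁ : ∀ B : Set (Fin m), M₁.IsBase B → B.ncard = k)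
    (hrk₂ : ∀ B : Set (Fin m), M₂.IsBase B → B.ncard = k)
    (hind : ∀ S : Set (Fin m), M₂.Indep S → M₁.Indep S)
    (B : Finset (Fin m)) (hB : IsBrokenCircuitOf M₁ B) :
    ∃ B' : Finset (Fin m), IsBrokenCircuitOf M₂ B' ∧ B' ⊆ B :=
  stmt14_general M₁ M₂ hind B hB
end
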